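/- Let T > 0, r ≥ 1 and β ∈ (0,1/2). Then there exists a constant C > 0, depending only on β, r and T, such that for every integer N ≥ 2 and every n ∈ {2,…,N}, ∫_{t₁}^{t_n} (t_n − s)^{−2β} · ( ∫_{t₁}^{ŝ} |(s − u)^{−β} − (ŝ − u)^{−β}|²·û^{2β−1}·(u − û)^{1−2β} du ) ds ≤ C·N^{−2(1−2β)}, where ŝ and û are the left graded-mesh points of s and u respectively. -/

import Mathlib

/-!
For `s ∈ [t_i, t_{i+1})` the inner integral runs over `[t_1, t_i]`; for `i ≥ 2` split it at
`t_{i-1}`. On the last cell the kernel difference is at most `(t_i - u)^{-β}`; on `[t_1, t_{i-1}]`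
the mean value theorem bounds it by `β (s - t_i) (t_i - u)^{-β-1}`, and
`s - t_i ≤ 3^{r-1} (t_i - t_{i-1})`. On the graded mesh every step is at most `rT/N` and
`t_{j+1} ≤ 2^r t_j`, so the weight `((u - û)/û)^{1-2β}` is `O(N^{-(1-2β)} u^{2β-1})`, and likewise
the relative step `((t_i - t_{i-1})/t_i)^{1-2β}` is `O(N^{-(1-2β)} s^{2β-1})`. The inner integral is
therefore `O(N^{-2(1-2β)} s^{2β-1})`, and `∫ (t_n - s)^{-2β} s^{2β-1} ds` is bounded independently
of `t_n`. All singular integrals are estimated by splitting `(c - u)^p u^q` at `u = c/2`.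
-/

/-- The graded mesh point `t_n = T * (n/N)^r`. -/
noncomputable def gmesh (T r : ℝ) (N n : ℕ) : ℝ := T * ((n : ℝ) / (N : ℝ)) ^ r

open Real Set MeasureTheory intervalIntegral

lemma rpow_neg_sub_rpow_neg_le {β x y : ℝ} (hβ : 0 ≤ β) (hx : 0 < x) (hxy : x ≤ y) :
    x ^ (-β) - y ^ (-β) ≤ β * (y - x) * x ^ (-β - 1) := by
  rcases hxy.eq_or_lt with rfl | hxy
  · simp
  obtain ⟨ξ, hξ, hslope⟩ := exists_hasDerivAt_eq_slope (fun t => t ^ (-β))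
    (fun t => -β * t ^ (-β - 1)) hxy
    (continuousOn_id.rpow_const fun t ht => Or.inl (hx.trans_le ht.1).ne')
    (fun t ht => hasDerivAt_rpow_const (Or.inl (hx.trans ht.1).ne'))
  have hξx : ξ ^ (-β - 1) ≤ x ^ (-β - 1) := rpow_le_rpow_of_nonpos hx hξ.1.le (by linarith)
  rw [eq_div_iff (sub_pos.2 hxy).ne'] at hslope
  nlinarith [mul_le_mul_of_nonneg_left hξx (mul_nonneg hβ (sub_pos.2 hxy).le)]

lemma sq_abs_rpow_neg_sub_rpow_neg_le {β x y : ℝ} (hβ : 0 ≤ β) (hx : 0 < x) (hxy : x ≤ y) :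
    |y ^ (-β) - x ^ (-β)| ^ 2 ≤ x ^ (-(2 * β)) := by
  have hyx := rpow_le_rpow_of_nonpos hx hxy (neg_nonpos.2 hβ)
  rw [abs_sub_comm, abs_of_nonneg (sub_nonneg.2 hyx),
    show -(2 * β) = -β * (2 : ℕ) by push_cast; ring, rpow_mul_natCast hx.le]
  exact pow_le_pow_left₀ (sub_nonneg.2 hyx)
    (by linarith [rpow_nonneg (hx.trans_le hxy).le (-β)]) 2

lemma sq_abs_rpow_neg_sub_rpow_neg_le_mul {β x y : ℝ} (hβ : 0 ≤ β) (hx : 0 < x)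
    (hxy : x ≤ y) :
    |y ^ (-β) - x ^ (-β)| ^ 2 ≤ (β * (y - x)) ^ 2 * x ^ (-2 * β - 2) := by
  have hyx := rpow_le_rpow_of_nonpos hx hxy (neg_nonpos.2 hβ)
  rw [abs_sub_comm, abs_of_nonneg (sub_nonneg.2 hyx),
    show -2 * β - 2 = (-β - 1) * (2 : ℕ) by push_cast; ring, rpow_mul_natCast hx.le,
    ← mul_pow]
  exact pow_le_pow_left₀ (sub_nonneg.2 hyx) (rpow_neg_sub_rpow_neg_le hβ hx hxy) 2

lemma rpow_sub_rpow_le_mul {p x y : ℝ} (hp : 1 ≤ p) (hx : 0 ≤ x) (hxy : x ≤ y) :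
    y ^ p - x ^ p ≤ p * y ^ (p - 1) * (y - x) := by
  rcases hxy.eq_or_lt with rfl | hxy
  · simp
  have h := (convexOn_rpow hp).slope_le_of_hasDerivAt (mem_Ici.2 hx)
    (mem_Ici.2 (hx.trans hxy.le)) hxy (hasDerivAt_rpow_const (Or.inr hp))
  rwa [slope_def_field, div_le_iff₀ (sub_pos.2 hxy)] at h

lemma mul_le_rpow_sub_rpow {p x y : ℝ} (hp : 1 ≤ p) (hx : 0 ≤ x) (hxy : x ≤ y) :
    p * x ^ (p - 1) * (y - x) ≤ y ^ p - x ^ p := by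
  rcases hxy.eq_or_lt with rfl | hxy
  · simp
  have h := (convexOn_rpow hp).le_slope_of_hasDerivAt (mem_Ici.2 hx)
    (mem_Ici.2 (hx.trans hxy.le)) hxy (hasDerivAt_rpow_const (Or.inr hp))
  rwa [slope_def_field, le_div_iff₀ (sub_pos.2 hxy)] at h

lemma rpow_mul_rpow_le_of_le_mul {β x y d H D : ℝ} (hβ : β ≤ 1 / 2) (hx : 0 < x) (hy : 0 < y)
    (hyx : y ≤ D * x) (hd : 0 ≤ d) (hdH : d ≤ H) :
    x ^ (2 * β - 1) * d ^ (1 - 2 * β) ≤ (D * H) ^ (1 - 2 * β) * y ^ (2 * β - 1) := by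
  have hD : 0 < D := pos_of_mul_pos_left (hy.trans_le hyx) hx.le
  have hH : 0 ≤ H := hd.trans hdH
  have key : d / x ≤ D * H / y := by
    rw [div_le_div_iff₀ hx hy]
    nlinarith [mul_le_mul_of_nonneg_left hyx hH]
  have hrw : ∀ {u v : ℝ}, 0 ≤ u → 0 < v →
      (u / v) ^ (1 - 2 * β) = v ^ (2 * β - 1) * u ^ (1 - 2 * β) := fun hu hv => by
    rw [div_rpow hu hv.le, show 2 * β - 1 = -(1 - 2 * β) by ring, rpow_neg hv.le,
      div_eq_inv_mul]
  calc x ^ (2 * β - 1) * d ^ (1 - 2 * β) = (d / x) ^ (1 - 2 * β) := (hrw hd hx).symm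
    _ ≤ (D * H / y) ^ (1 - 2 * β) := rpow_le_rpow (by positivity) key (by linarith)
    _ = _ := by rw [hrw (by positivity) hy, mul_comm (y ^ _)]

lemma sub_rpow_mul_rpow_le {p q c u : ℝ} (hp : p ≤ 0) (hq : q ≤ 0) (hu : 0 < u)
    (huc : u < c) :
    (c - u) ^ p * u ^ q ≤ (c / 2) ^ p * u ^ q + (c / 2) ^ q * (c - u) ^ p := by
  have hc : 0 < c / 2 := by linarith
  have hcu : 0 < c - u := by linarith
  have h1 : 0 ≤ (c / 2) ^ p * u ^ q := by positivity
  have h2 : 0 ≤ (c / 2) ^ q * (c - u) ^ p := by positivity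
  rcases le_total u (c / 2) with h | h
  · have := rpow_le_rpow_of_nonpos hc (by linarith : c / 2 ≤ c - u) hp
    nlinarith [mul_le_mul_of_nonneg_right this (rpow_nonneg hu.le q)]
  · have := rpow_le_rpow_of_nonpos hc h hq
    nlinarith [mul_le_mul_of_nonneg_left this (rpow_nonneg hcu.le p)]

lemma intervalIntegrable_sub_rpow {a b c p : ℝ} (hab : a ≤ b) (hp : -1 < p ∨ b < c) :
    IntervalIntegrable (fun u => (c - u) ^ p) volume a b := by
  have h : IntervalIntegrable (fun v => v ^ p) volume (c - a) (c - b) := by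
    rcases hp with hp | hbc
    · exact intervalIntegrable_rpow' hp
    · refine intervalIntegrable_rpow (Or.inr ?_)
      rw [uIcc_of_ge (by linarith)]
      exact fun h0 => by linarith [h0.1]
  simpa using h.comp_sub_left c

lemma integral_sub_rpow {a b c p : ℝ} (hab : a ≤ b) (hp : -1 < p ∨ p ≠ -1 ∧ b < c) :
    ∫ u in a..b, (c - u) ^ p = ((c - a) ^ (p + 1) - (c - b) ^ (p + 1)) / (p + 1) := by
  rw [intervalIntegral.integral_comp_sub_left (fun v => v ^ p), integral_rpow]
  rcases hp with hp | ⟨hp, hbc⟩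
  · exact Or.inl hp
  · refine Or.inr ⟨hp, ?_⟩
    rw [uIcc_of_le (by linarith)]
    exact fun h0 => by linarith [h0.1]

lemma intervalIntegrable_sub_rpow_mul_rpow {a b c p q : ℝ} (ha : 0 < a) (hab : a ≤ b)
    (hp : -1 < p ∨ b < c) :
    IntervalIntegrable (fun u => (c - u) ^ p * u ^ q) volume a b := by
  refine (intervalIntegrable_sub_rpow hab hp).mul_continuousOn
    (continuousOn_id.rpow_const fun u hu => Or.inl ?_)
  rw [uIcc_of_le hab] at hu
  exact (ha.trans_le hu.1).ne'

lemma integral_sub_rpow_mul_rpow_le {a b c p q : ℝ} (ha : 0 < a) (hab : a ≤ b) (hbc : b ≤ c)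
    (hp0 : p ≤ 0) (hp : -1 < p ∨ p ≠ -1 ∧ b < c) (hq : -1 < q) (hq0 : q ≤ 0) :
    ∫ u in a..b, (c - u) ^ p * u ^ q ≤
      2 ^ (-p) * c ^ p * (b ^ (q + 1) / (q + 1)) +
        2 ^ (-q) * c ^ q * (((c - a) ^ (p + 1) - (c - b) ^ (p + 1)) / (p + 1)) := by
  have hc : 0 < c := by linarith
  have hcp : IntervalIntegrable (fun u => (c - u) ^ p) volume a b :=
    intervalIntegrable_sub_rpow hab (hp.imp id And.right)
  have hcq : IntervalIntegrable (fun u : ℝ => u ^ q) volume a b := intervalIntegrable_rpow' hq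
  have half_rpow : ∀ e : ℝ, (c / 2) ^ e = 2 ^ (-e) * c ^ e := fun e => by
    rw [div_rpow hc.le zero_le_two, rpow_neg zero_le_two, div_eq_inv_mul]
  calc ∫ u in a..b, (c - u) ^ p * u ^ q
      ≤ ∫ u in a..b, ((c / 2) ^ p * u ^ q + (c / 2) ^ q * (c - u) ^ p) :=
        integral_mono_on_of_le_Ioo hab
          (intervalIntegrable_sub_rpow_mul_rpow ha hab (hp.imp id And.right))
          ((hcq.const_mul _).add (hcp.const_mul _))
          fun u hu => sub_rpow_mul_rpow_le hp0 hq0 (ha.trans hu.1) (hu.2.trans_le hbc)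
    _ = 2 ^ (-p) * c ^ p * ((b ^ (q + 1) - a ^ (q + 1)) / (q + 1)) +
          2 ^ (-q) * c ^ q * (((c - a) ^ (p + 1) - (c - b) ^ (p + 1)) / (p + 1)) := by
        rw [integral_add (hcq.const_mul _) (hcp.const_mul _), intervalIntegral.integral_const_mul,
          intervalIntegral.integral_const_mul, integral_rpow (Or.inl hq), integral_sub_rpow hab hp,
          half_rpow, half_rpow]
    _ ≤ _ := by
        have : 0 ≤ a ^ (q + 1) := by positivity
        have : 0 < q + 1 := by linarith
        gcongr
        linarith

lemma integral_sub_rpow_mul_rpow_le_of_lt {a b c β : ℝ} (hβ0 : 0 < β) (hβ1 : β < 1 / 2)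
    (ha : 0 < a) (hab : a ≤ b) (hbc : b < c) :
    ∫ u in a..b, (c - u) ^ (-2 * β - 2) * u ^ (2 * β - 1) ≤
      (2 ^ (2 * β + 2) / (2 * β) + 2 ^ (1 - 2 * β) / (2 * β + 1)) *
        (c ^ (2 * β - 1) * (c - b) ^ (-2 * β - 1)) := by
  have hb : 0 < b := ha.trans_le hab
  have hc : 0 < c := hb.trans hbc
  have hh : 0 < c - b := sub_pos.2 hbc
  have hI := integral_sub_rpow_mul_rpow_le (p := -2 * β - 2) (q := 2 * β - 1) ha hab hbc.le
    (by linarith) (Or.inr ⟨by linarith, hbc⟩) (by linarith) (by linarith)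
  rw [show -(-2 * β - 2) = 2 * β + 2 by ring, show 2 * β - 1 + 1 = 2 * β by ring,
    show -(2 * β - 1) = 1 - 2 * β by ring, show -2 * β - 2 + 1 = -2 * β - 1 by ring] at hI
  have hleft : c ^ (-2 * β - 2) * b ^ (2 * β) ≤ c ^ (2 * β - 1) * (c - b) ^ (-2 * β - 1) :=
    calc c ^ (-2 * β - 2) * b ^ (2 * β) ≤ c ^ (-2 * β - 2) * c ^ (2 * β) := by
          gcongr
      _ = c ^ (2 * β - 1) * c ^ (-2 * β - 1) := by
          rw [← rpow_add hc, ← rpow_add hc]; ring_nf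
      _ ≤ c ^ (2 * β - 1) * (c - b) ^ (-2 * β - 1) := by
          exact mul_le_mul_of_nonneg_left
            (rpow_le_rpow_of_nonpos hh (sub_le_self c hb.le) (by linarith)) (by positivity)
  have hright : ((c - a) ^ (-2 * β - 1) - (c - b) ^ (-2 * β - 1)) / (-2 * β - 1) ≤
      (c - b) ^ (-2 * β - 1) / (2 * β + 1) := by
    rw [show -2 * β - 1 = -(2 * β + 1) by ring, div_neg, ← neg_div, neg_sub]
    have : 0 ≤ (c - a) ^ (-(2 * β + 1)) := rpow_nonneg (by linarith) _
    gcongr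
    linarith
  calc _ ≤ _ := hI
    _ = 2 ^ (2 * β + 2) / (2 * β) * (c ^ (-2 * β - 2) * b ^ (2 * β)) +
          2 ^ (1 - 2 * β) * (c ^ (2 * β - 1) *
            (((c - a) ^ (-2 * β - 1) - (c - b) ^ (-2 * β - 1)) / (-2 * β - 1))) := by
        ring
    _ ≤ 2 ^ (2 * β + 2) / (2 * β) * (c ^ (2 * β - 1) * (c - b) ^ (-2 * β - 1)) +
          2 ^ (1 - 2 * β) * (c ^ (2 * β - 1) * ((c - b) ^ (-2 * β - 1) / (2 * β + 1))) := by
        gcongr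
    _ = _ := by ring

lemma integral_sub_rpow_neg_mul_rpow_le {a c β : ℝ} (hβ0 : 0 < β) (hβ1 : β < 1 / 2)
    (ha : 0 < a) (hac : a ≤ c) :
    ∫ s in a..c, (c - s) ^ (-(2 * β)) * s ^ (2 * β - 1) ≤
      2 ^ (2 * β) / (2 * β) + 2 ^ (1 - 2 * β) / (1 - 2 * β) := by
  have hc : 0 < c := ha.trans_le hac
  have hI := integral_sub_rpow_mul_rpow_le (p := -(2 * β)) (q := 2 * β - 1) ha hac le_rfl
    (by linarith) (Or.inl (by linarith)) (by linarith) (by linarith)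
  rw [show -(-(2 * β)) = 2 * β by ring, show 2 * β - 1 + 1 = 2 * β by ring,
    show -(2 * β - 1) = 1 - 2 * β by ring, show -(2 * β) + 1 = 1 - 2 * β by ring, sub_self,
    zero_rpow (by linarith), sub_zero] at hI
  have hleft : c ^ (-(2 * β)) * c ^ (2 * β) = 1 := by
    rw [← rpow_add hc, neg_add_cancel, rpow_zero]
  have hright : c ^ (2 * β - 1) * (c - a) ^ (1 - 2 * β) ≤ 1 :=
    calc c ^ (2 * β - 1) * (c - a) ^ (1 - 2 * β) ≤ c ^ (2 * β - 1) * c ^ (1 - 2 * β) := by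
          have : 0 ≤ c - a := by linarith
          gcongr
          · linarith
          · linarith
      _ = 1 := by rw [← rpow_add hc, show 2 * β - 1 + (1 - 2 * β) = 0 by ring, rpow_zero]
  have : 0 < 1 - 2 * β := by linarith
  calc _ ≤ _ := hI
    _ = 2 ^ (2 * β) / (2 * β) * (c ^ (-(2 * β)) * c ^ (2 * β)) +
          2 ^ (1 - 2 * β) / (1 - 2 * β) * (c ^ (2 * β - 1) * (c - a) ^ (1 - 2 * β)) := by ring
    _ ≤ 2 ^ (2 * β) / (2 * β) * 1 + 2 ^ (1 - 2 * β) / (1 - 2 * β) * 1 := by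
        rw [hleft]
        gcongr
    _ = _ := by ring

lemma integral_kernel_sq_far_le {a b c s β A κ : ℝ} {w : ℝ → ℝ} (hβ0 : 0 < β)
    (hβ1 : β < 1 / 2) (ha : 0 < a) (hab : a ≤ b) (hbc : b < c) (hcs : c ≤ s)
    (hκ : s - c ≤ κ * (c - b)) (hA : 0 ≤ A) (hw : ∀ u ∈ Ioo a b, w u ≤ A * u ^ (2 * β - 1))
    (hint : IntervalIntegrable (fun u => |(s - u) ^ (-β) - (c - u) ^ (-β)| ^ 2 * w u)
      volume a b) :
    ∫ u in a..b, |(s - u) ^ (-β) - (c - u) ^ (-β)| ^ 2 * w u ≤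
      A * (β ^ 2 * κ ^ 2 * (2 ^ (2 * β + 2) / (2 * β) + 2 ^ (1 - 2 * β) / (2 * β + 1))) *
        (c ^ (2 * β - 1) * (c - b) ^ (1 - 2 * β)) := by
  have hh : 0 < c - b := sub_pos.2 hbc
  have hpt : ∀ u ∈ Ioo a b, |(s - u) ^ (-β) - (c - u) ^ (-β)| ^ 2 * w u ≤
      A * (β * (s - c)) ^ 2 * ((c - u) ^ (-2 * β - 2) * u ^ (2 * β - 1)) := by
    intro u hu
    have hcu : 0 < c - u := by linarith [hu.2]
    have hsq := sq_abs_rpow_neg_sub_rpow_neg_le_mul hβ0.le hcu (by linarith : c - u ≤ s - u)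
    rw [sub_sub_sub_cancel_right] at hsq
    have hu0 : 0 < u := ha.trans hu.1
    calc _ ≤ |(s - u) ^ (-β) - (c - u) ^ (-β)| ^ 2 * (A * u ^ (2 * β - 1)) :=
          mul_le_mul_of_nonneg_left (hw u hu) (by positivity)
      _ ≤ (β * (s - c)) ^ 2 * (c - u) ^ (-2 * β - 2) * (A * u ^ (2 * β - 1)) :=
          mul_le_mul_of_nonneg_right hsq (by positivity)
      _ = _ := by ring
  have hstep : (s - c) ^ 2 * (c - b) ^ (-2 * β - 1) ≤ κ ^ 2 * (c - b) ^ (1 - 2 * β) := by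
    have hδ : (s - c) ^ 2 ≤ κ ^ 2 * (c - b) ^ 2 := by
      rw [← mul_pow]; exact pow_le_pow_left₀ (sub_nonneg.2 hcs) hκ 2
    calc (s - c) ^ 2 * (c - b) ^ (-2 * β - 1)
        ≤ κ ^ 2 * (c - b) ^ 2 * (c - b) ^ (-2 * β - 1) := by gcongr
      _ = κ ^ 2 * (c - b) ^ (1 - 2 * β) := by
          rw [mul_assoc, ← rpow_two (c - b), ← rpow_add hh]; ring_nf
  have hmaj := (intervalIntegrable_sub_rpow_mul_rpow (p := -2 * β - 2) (q := 2 * β - 1) ha hab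
    (Or.inr hbc)).const_mul (A * (β * (s - c)) ^ 2)
  calc ∫ u in a..b, |(s - u) ^ (-β) - (c - u) ^ (-β)| ^ 2 * w u
      ≤ ∫ u in a..b, A * (β * (s - c)) ^ 2 * ((c - u) ^ (-2 * β - 2) * u ^ (2 * β - 1)) :=
        integral_mono_on_of_le_Ioo hab hint hmaj hpt
    _ = A * (β * (s - c)) ^ 2 * ∫ u in a..b, (c - u) ^ (-2 * β - 2) * u ^ (2 * β - 1) :=
        intervalIntegral.integral_const_mul _ _
    _ ≤ A * (β * (s - c)) ^ 2 *
          ((2 ^ (2 * β + 2) / (2 * β) + 2 ^ (1 - 2 * β) / (2 * β + 1)) *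
            (c ^ (2 * β - 1) * (c - b) ^ (-2 * β - 1))) := by
        gcongr
        exact integral_sub_rpow_mul_rpow_le_of_lt hβ0 hβ1 ha hab hbc
    _ = A * β ^ 2 * (2 ^ (2 * β + 2) / (2 * β) + 2 ^ (1 - 2 * β) / (2 * β + 1)) *
          c ^ (2 * β - 1) * ((s - c) ^ 2 * (c - b) ^ (-2 * β - 1)) := by ring
    _ ≤ A * β ^ 2 * (2 ^ (2 * β + 2) / (2 * β) + 2 ^ (1 - 2 * β) / (2 * β + 1)) *
          c ^ (2 * β - 1) * (κ ^ 2 * (c - b) ^ (1 - 2 * β)) := by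
        have hc : 0 ≤ c := by linarith
        gcongr
    _ = _ := by ring

lemma integral_kernel_sq_near_le {b c s β A D : ℝ} {w : ℝ → ℝ} (hβ0 : 0 < β)
    (hβ1 : β < 1 / 2) (hb : 0 < b) (hbc : b < c) (hcs : c ≤ s) (hD : c ≤ D * b) (hA : 0 ≤ A)
    (hw : ∀ u ∈ Ioo b c, w u ≤ A * u ^ (2 * β - 1))
    (hint : IntervalIntegrable (fun u => |(s - u) ^ (-β) - (c - u) ^ (-β)| ^ 2 * w u)
      volume b c) :
    ∫ u in b..c, |(s - u) ^ (-β) - (c - u) ^ (-β)| ^ 2 * w u ≤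
      A * (D ^ (1 - 2 * β) / (1 - 2 * β)) * (c ^ (2 * β - 1) * (c - b) ^ (1 - 2 * β)) := by
  have hc : 0 < c := hb.trans hbc
  have hD0 : 0 < D := pos_of_mul_pos_left (hc.trans_le hD) hb.le
  have hpt : ∀ u ∈ Ioo b c, |(s - u) ^ (-β) - (c - u) ^ (-β)| ^ 2 * w u ≤
      A * b ^ (2 * β - 1) * (c - u) ^ (-(2 * β)) := by
    intro u hu
    have hcu : 0 < c - u := sub_pos.2 hu.2
    have hwb : w u ≤ A * b ^ (2 * β - 1) := (hw u hu).trans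
      (mul_le_mul_of_nonneg_left (rpow_le_rpow_of_nonpos hb hu.1.le (by linarith)) hA)
    calc _ ≤ |(s - u) ^ (-β) - (c - u) ^ (-β)| ^ 2 * (A * b ^ (2 * β - 1)) :=
          mul_le_mul_of_nonneg_left hwb (by positivity)
      _ ≤ (c - u) ^ (-(2 * β)) * (A * b ^ (2 * β - 1)) :=
          mul_le_mul_of_nonneg_right
            (sq_abs_rpow_neg_sub_rpow_neg_le hβ0.le hcu (by linarith)) (by positivity)
      _ = _ := by ring
  have hbD : b ^ (2 * β - 1) ≤ D ^ (1 - 2 * β) * c ^ (2 * β - 1) :=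
    calc b ^ (2 * β - 1) ≤ (c / D) ^ (2 * β - 1) :=
          rpow_le_rpow_of_nonpos (by positivity) ((div_le_iff₀ hD0).2 (by linarith)) (by linarith)
      _ = D ^ (1 - 2 * β) * c ^ (2 * β - 1) := by
          rw [div_rpow hc.le hD0.le, show 2 * β - 1 = -(1 - 2 * β) by ring, rpow_neg hD0.le,
            div_inv_eq_mul, mul_comm]
  have hmaj := (intervalIntegrable_sub_rpow (c := c) (p := -(2 * β)) hbc.le
    (Or.inl (by linarith))).const_mul (A * b ^ (2 * β - 1))
  calc ∫ u in b..c, |(s - u) ^ (-β) - (c - u) ^ (-β)| ^ 2 * w u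
      ≤ ∫ u in b..c, A * b ^ (2 * β - 1) * (c - u) ^ (-(2 * β)) :=
        integral_mono_on_of_le_Ioo hbc.le hint hmaj hpt
    _ = A * b ^ (2 * β - 1) * ((c - b) ^ (1 - 2 * β) / (1 - 2 * β)) := by
        rw [intervalIntegral.integral_const_mul, integral_sub_rpow hbc.le (Or.inl (by linarith)),
          show -(2 * β) + 1 = 1 - 2 * β by ring, sub_self, zero_rpow (by linarith), sub_zero]
    _ ≤ A * (D ^ (1 - 2 * β) * c ^ (2 * β - 1)) * ((c - b) ^ (1 - 2 * β) / (1 - 2 * β)) := by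
        have : 0 ≤ 1 - 2 * β := by linarith
        have : 0 ≤ c - b := by linarith
        gcongr
    _ = _ := by ring

noncomputable def kernelConst (β κ D : ℝ) : ℝ :=
  β ^ 2 * κ ^ 2 * (2 ^ (2 * β + 2) / (2 * β) + 2 ^ (1 - 2 * β) / (2 * β + 1)) +
    D ^ (1 - 2 * β) / (1 - 2 * β)

lemma kernelConst_pos {β κ D : ℝ} (hβ0 : 0 < β) (hβ1 : β < 1 / 2) (hD : 0 < D) :
    0 < kernelConst β κ D := by
  have : 0 < 1 - 2 * β := by linarith
  unfold kernelConst
  positivity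

lemma integral_kernel_sq_le {a b c s β A κ D : ℝ} {w : ℝ → ℝ} (hβ0 : 0 < β)
    (hβ1 : β < 1 / 2) (ha : 0 < a) (hab : a ≤ b) (hbc : b < c) (hcs : c ≤ s)
    (hκ : s - c ≤ κ * (c - b)) (hD : c ≤ D * b) (hA : 0 ≤ A) (hw : ∀ u ∈ Ioo a c, w u ≤ A * u ^ (2 * β - 1)) :
    ∫ u in a..c, |(s - u) ^ (-β) - (c - u) ^ (-β)| ^ 2 * w u ≤
      A * kernelConst β κ D * (c ^ (2 * β - 1) * (c - b) ^ (1 - 2 * β)) := by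
  have hb : 0 < b := ha.trans_le hab
  have hD0 : 0 < D := pos_of_mul_pos_left ((hb.trans hbc).trans_le hD) hb.le
  -- A non-integrable integrand has integral `0`, which is below the nonnegative bound.
  by_cases hint : IntervalIntegrable
    (fun u => |(s - u) ^ (-β) - (c - u) ^ (-β)| ^ 2 * w u) volume a c
  swap
  · rw [integral_undef hint]
    have := kernelConst_pos (κ := κ) hβ0 hβ1 hD0
    have := (hb.trans hbc).le
    have := (sub_pos.2 hbc).le
    positivity
  have hint_far := hint.mono_set (uIcc_subset_uIcc_left (mem_uIcc_of_le hab hbc.le))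
  have hint_near := hint.mono_set (uIcc_subset_uIcc_right (mem_uIcc_of_le hab hbc.le))
  have hfar := integral_kernel_sq_far_le hβ0 hβ1 ha hab hbc hcs hκ hA
    (fun u hu => hw u ⟨hu.1, hu.2.trans hbc⟩) hint_far
  have hnear := integral_kernel_sq_near_le hβ0 hβ1 hb hbc hcs hD hA
    (fun u hu => hw u ⟨hab.trans_lt hu.1, hu.2⟩) hint_near
  rw [← integral_add_adjacent_intervals hint_far hint_near]
  unfold kernelConst
  linarith

lemma integral_sub_rpow_neg_mul_le {a c β M : ℝ} {f : ℝ → ℝ} (hβ0 : 0 < β)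
    (hβ1 : β < 1 / 2) (ha : 0 < a) (hac : a ≤ c) (hM : 0 ≤ M)
    (hf : ∀ s ∈ Ioo a c, f s ≤ M * s ^ (2 * β - 1)) :
    ∫ s in a..c, (c - s) ^ (-(2 * β)) * f s ≤
      M * (2 ^ (2 * β) / (2 * β) + 2 ^ (1 - 2 * β) / (1 - 2 * β)) := by
  by_cases hint : IntervalIntegrable (fun s => (c - s) ^ (-(2 * β)) * f s) volume a c
  swap
  · have : 0 < 1 - 2 * β := by linarith
    rw [integral_undef hint]
    positivity
  have hpt : ∀ s ∈ Ioo a c, (c - s) ^ (-(2 * β)) * f s ≤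
      M * ((c - s) ^ (-(2 * β)) * s ^ (2 * β - 1)) := fun s hs => by
    have := rpow_nonneg (sub_pos.2 hs.2).le (-(2 * β))
    calc _ ≤ (c - s) ^ (-(2 * β)) * (M * s ^ (2 * β - 1)) := by gcongr; exact hf s hs
      _ = _ := by ring
  have hmaj := (intervalIntegrable_sub_rpow_mul_rpow (c := c) (p := -(2 * β)) (q := 2 * β - 1)
    ha hac (Or.inl (by linarith))).const_mul M
  calc ∫ s in a..c, (c - s) ^ (-(2 * β)) * f s
      ≤ ∫ s in a..c, M * ((c - s) ^ (-(2 * β)) * s ^ (2 * β - 1)) :=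
        integral_mono_on_of_le_Ioo hac hint hmaj hpt
    _ = M * ∫ s in a..c, (c - s) ^ (-(2 * β)) * s ^ (2 * β - 1) :=
        intervalIntegral.integral_const_mul _ _
    _ ≤ _ := by
        gcongr
        exact integral_sub_rpow_neg_mul_rpow_le hβ0 hβ1 ha hac

lemma Monotone.exists_le_lt_succ {α : Type*} [LinearOrder α] {f : ℕ → α} (hf : Monotone f)
    {a m : ℕ} {x : α} (ha : f a ≤ x) (hm : x < f m) :
    ∃ j, a ≤ j ∧ j < m ∧ f j ≤ x ∧ x < f (j + 1) := by
  classical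
  have hex : ∃ k, x < f k := ⟨m, hm⟩
  have hk : x < f (Nat.find hex) := Nat.find_spec hex
  have hak : a < Nat.find hex := by
    by_contra! h
    exact (hk.trans_le (hf h)).not_ge ha
  refine ⟨Nat.find hex - 1, by omega, by have := Nat.find_min' hex hm; omega,
    not_lt.1 (Nat.find_min hex (by omega)), ?_⟩
  rwa [Nat.sub_add_cancel (by omega)]

section GradedMesh

variable {T r β : ℝ} {N : ℕ} {hat : ℝ → ℝ}

lemma gmesh_pos (hT : 0 < T) (hN : 0 < N) {i : ℕ} (hi : 0 < i) : 0 < gmesh T r N i := by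
  unfold gmesh; positivity

lemma gmesh_strictMono (hT : 0 < T) (hr : 0 < r) (hN : 0 < N) : StrictMono (gmesh T r N) :=
  fun i j hij => by
    unfold gmesh
    gcongr

lemma gmesh_succ_sub_le (hT : 0 ≤ T) (hr : 1 ≤ r) {j : ℕ} (hj : j + 1 ≤ N) :
    gmesh T r N (j + 1) - gmesh T r N j ≤ r * T / N := by
  have hN : (0 : ℝ) < N := by exact_mod_cast (Nat.succ_pos j).trans_le hj
  have hle : ((j : ℝ) + 1) / N ≤ 1 := by rw [div_le_one hN]; exact_mod_cast hj
  have hstep : (j : ℝ) / N ≤ ((j : ℝ) + 1) / N := by gcongr; linarith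
  have hpow : (((j : ℝ) + 1) / N) ^ (r - 1) ≤ 1 := rpow_le_one (by positivity) hle (by linarith)
  unfold gmesh
  push_cast
  calc T * (((j : ℝ) + 1) / N) ^ r - T * ((j : ℝ) / N) ^ r
      = T * ((((j : ℝ) + 1) / N) ^ r - ((j : ℝ) / N) ^ r) := by ring
    _ ≤ T * (r * (((j : ℝ) + 1) / N) ^ (r - 1) * (((j : ℝ) + 1) / N - (j : ℝ) / N)) := by
        gcongr
        exact rpow_sub_rpow_le_mul hr (by positivity) hstep
    _ ≤ T * (r * 1 * (((j : ℝ) + 1) / N - (j : ℝ) / N)) := by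
        gcongr
    _ = r * T / N := by field_simp; ring

lemma gmesh_succ_le (hT : 0 ≤ T) (hr : 0 ≤ r) {j : ℕ} (hj : 1 ≤ j) :
    gmesh T r N (j + 1) ≤ 2 ^ r * gmesh T r N j := by
  have hj' : (1 : ℝ) ≤ j := by exact_mod_cast hj
  unfold gmesh
  calc T * (((j + 1 : ℕ) : ℝ) / N) ^ r ≤ T * (2 * ((j : ℝ) / N)) ^ r := by
        gcongr
        rw [mul_div_assoc']
        gcongr
        push_cast
        linarith
    _ = 2 ^ r * (T * ((j : ℝ) / N) ^ r) := by rw [mul_rpow zero_le_two (by positivity)]; ring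

lemma gmesh_step_le (hT : 0 ≤ T) (hr : 1 ≤ r) (hN : 0 < N) {j : ℕ} (hj : 1 ≤ j) :
    gmesh T r N (j + 2) - gmesh T r N (j + 1) ≤
      3 ^ (r - 1) * (gmesh T r N (j + 1) - gmesh T r N j) := by
  have hN' : (0 : ℝ) < N := by exact_mod_cast hN
  have hj' : (1 : ℝ) ≤ j := by exact_mod_cast hj
  set x : ℝ := (j : ℝ) / N
  have hx : 0 ≤ x := by positivity
  have e1 : ((j + 1 : ℕ) : ℝ) / N = x + 1 / N := by push_cast; ring
  have e2 : ((j + 2 : ℕ) : ℝ) / N = x + 1 / N + 1 / N := by push_cast; ring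
  have hd : (0 : ℝ) ≤ 1 / N := by positivity
  have hupper := rpow_sub_rpow_le_mul hr (by positivity) (le_add_of_nonneg_right hd :
    x + 1 / N ≤ x + 1 / N + 1 / N)
  have hlower := mul_le_rpow_sub_rpow hr hx (le_add_of_nonneg_right hd : x ≤ x + 1 / N)
  have h3 : (x + 1 / N + 1 / N) ^ (r - 1) ≤ 3 ^ (r - 1) * x ^ (r - 1) := by
    have : 1 / (N : ℝ) ≤ x := div_le_div_of_nonneg_right hj' hN'.le
    rw [← mul_rpow zero_le_three hx]
    exact rpow_le_rpow (by positivity) (by linarith) (by linarith)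
  unfold gmesh
  rw [e1, e2]
  simp only [add_sub_cancel_left] at hupper hlower
  calc T * (x + 1 / N + 1 / N) ^ r - T * (x + 1 / N) ^ r
      = T * ((x + 1 / N + 1 / N) ^ r - (x + 1 / N) ^ r) := by ring
    _ ≤ T * (r * (3 ^ (r - 1) * x ^ (r - 1)) * (1 / N)) := by
        refine mul_le_mul_of_nonneg_left (hupper.trans ?_) hT
        gcongr
    _ = 3 ^ (r - 1) * (T * (r * x ^ (r - 1) * (1 / N))) := by ring
    _ ≤ 3 ^ (r - 1) * (T * ((x + 1 / N) ^ r - x ^ r)) := by gcongr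
    _ = _ := by ring

lemma hat_weight_le (hT : 0 < T) (hr : 1 ≤ r) (hβ : β ≤ 1 / 2) (hN : 0 < N)
    (hhat : ∀ i : ℕ, i < N →
      ∀ s ∈ Set.Ico (gmesh T r N i) (gmesh T r N (i + 1)), hat s = gmesh T r N i)
    {u : ℝ} (hu1 : gmesh T r N 1 ≤ u) (huN : u < gmesh T r N N) :
    hat u ^ (2 * β - 1) * (u - hat u) ^ (1 - 2 * β) ≤
      (2 ^ r * (r * T / N)) ^ (1 - 2 * β) * u ^ (2 * β - 1) := by
  obtain ⟨j, hj1, hjN, hju, huj⟩ :=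
    (gmesh_strictMono hT (zero_lt_one.trans_le hr) hN).monotone.exists_le_lt_succ hu1 huN
  rw [hhat j hjN u ⟨hju, huj⟩]
  have hstep := gmesh_succ_sub_le hT.le hr hjN
  exact rpow_mul_rpow_le_of_le_mul hβ (gmesh_pos hT hN hj1)
    ((gmesh_pos hT hN one_pos).trans_le hu1) (huj.le.trans (gmesh_succ_le hT.le (by linarith) hj1))
    (sub_nonneg.2 hju) (by linarith)

lemma integral_kernel_sq_mul_hat_weight_le (hT : 0 < T) (hr : 1 ≤ r) (hβ0 : 0 < β)
    (hβ1 : β < 1 / 2) (hN : 0 < N)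
    (hhat : ∀ i : ℕ, i < N →
      ∀ s ∈ Set.Ico (gmesh T r N i) (gmesh T r N (i + 1)), hat s = gmesh T r N i)
    {s : ℝ} (hs1 : gmesh T r N 1 ≤ s) (hsN : s < gmesh T r N N) :
    ∫ u in (gmesh T r N 1)..(hat s),
        |(s - u) ^ (-β) - (hat s - u) ^ (-β)| ^ 2
          * (hat u) ^ (2 * β - 1) * (u - hat u) ^ (1 - 2 * β)
      ≤ kernelConst β (3 ^ (r - 1)) (2 ^ r) * ((2 ^ r * (r * T / N)) ^ (1 - 2 * β)) ^ 2 *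
          s ^ (2 * β - 1) := by
  have hmono := gmesh_strictMono hT (zero_lt_one.trans_le hr) hN
  have hK := kernelConst_pos (κ := 3 ^ (r - 1)) hβ0 hβ1 (by positivity : (0 : ℝ) < 2 ^ r)
  have hs0 : 0 < s := (gmesh_pos hT hN one_pos).trans_le hs1
  obtain ⟨i, hi1, hiN, hti, hsi⟩ := hmono.monotone.exists_le_lt_succ hs1 hsN
  rw [hhat i hiN s ⟨hti, hsi⟩]
  obtain rfl | hi2 := hi1.eq_or_lt
  · rw [integral_same]
    positivity
  obtain ⟨k, rfl⟩ : ∃ k, i = k + 2 := ⟨i - 2, by omega⟩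
  have hratio : s - gmesh T r N (k + 2) ≤
      3 ^ (r - 1) * (gmesh T r N (k + 2) - gmesh T r N (k + 1)) := by
    have := gmesh_step_le hT.le hr hN (j := k + 1) (by omega)
    linarith
  have hdouble : gmesh T r N (k + 2) ≤ 2 ^ r * gmesh T r N (k + 1) :=
    gmesh_succ_le hT.le (by linarith) (j := k + 1) (by omega)
  have hweight : ∀ u ∈ Ioo (gmesh T r N 1) (gmesh T r N (k + 2)),
      hat u ^ (2 * β - 1) * (u - hat u) ^ (1 - 2 * β) ≤
        (2 ^ r * (r * T / N)) ^ (1 - 2 * β) * u ^ (2 * β - 1) := fun u hu =>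
    hat_weight_le hT hr hβ1.le hN hhat hu.1.le (hu.2.trans_le (hmono.monotone hiN.le))
  have hrel : gmesh T r N (k + 2) ^ (2 * β - 1) *
      (gmesh T r N (k + 2) - gmesh T r N (k + 1)) ^ (1 - 2 * β) ≤
        (2 ^ r * (r * T / N)) ^ (1 - 2 * β) * s ^ (2 * β - 1) :=
    rpow_mul_rpow_le_of_le_mul hβ1.le (gmesh_pos hT hN (by omega)) hs0
      (hsi.le.trans (gmesh_succ_le hT.le (by linarith) (by omega)))
      (sub_nonneg.2 (hmono.monotone (by omega)))
      (gmesh_succ_sub_le hT.le hr (j := k + 1) (by omega))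
  calc _ = ∫ u in (gmesh T r N 1)..(gmesh T r N (k + 2)),
        |(s - u) ^ (-β) - (gmesh T r N (k + 2) - u) ^ (-β)| ^ 2 *
          (hat u ^ (2 * β - 1) * (u - hat u) ^ (1 - 2 * β)) :=
        integral_congr fun u _ => mul_assoc _ _ _
    _ ≤ (2 ^ r * (r * T / N)) ^ (1 - 2 * β) * kernelConst β (3 ^ (r - 1)) (2 ^ r) *
          (gmesh T r N (k + 2) ^ (2 * β - 1) *
            (gmesh T r N (k + 2) - gmesh T r N (k + 1)) ^ (1 - 2 * β)) :=
        integral_kernel_sq_le hβ0 hβ1 (gmesh_pos hT hN one_pos)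
          (hmono.monotone (by omega)) (hmono (by omega)) hti hratio hdouble (by positivity) hweight
    _ ≤ (2 ^ r * (r * T / N)) ^ (1 - 2 * β) * kernelConst β (3 ^ (r - 1)) (2 ^ r) *
          ((2 ^ r * (r * T / N)) ^ (1 - 2 * β) * s ^ (2 * β - 1)) := by gcongr
    _ = _ := by ring

end GradedMesh

/-- Double-integral kernel bound with singular weight (equation `eq.diffSqureDoub2`). -/
theorem stmt16 (T r β : ℝ) (hT : 0 < T) (hr : 1 ≤ r)
    (hβ : β ∈ Set.Ioo (0:ℝ) (1/2)) :
    ∃ C > (0:ℝ), ∀ N : ℕ, 2 ≤ N → ∀ hat : ℝ → ℝ,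
      (∀ i : ℕ, i < N →
        ∀ s ∈ Set.Ico (gmesh T r N i) (gmesh T r N (i + 1)), hat s = gmesh T r N i) →
      ∀ n : ℕ, 2 ≤ n → n ≤ N →
        (∫ s in (gmesh T r N 1)..(gmesh T r N n),
            (gmesh T r N n - s) ^ (-(2 * β)) *
              ∫ u in (gmesh T r N 1)..(hat s),
                |(s - u) ^ (-β) - (hat s - u) ^ (-β)| ^ 2
                  * (hat u) ^ (2 * β - 1) * (u - hat u) ^ (1 - 2 * β))
          ≤ C * (N : ℝ) ^ (-(2 * (1 - 2 * β))) := by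
  obtain ⟨hβ0, hβ1⟩ := hβ
  have hK := kernelConst_pos (κ := 3 ^ (r - 1)) hβ0 hβ1 (by positivity : (0 : ℝ) < 2 ^ r)
  have hB : 0 < 2 ^ (2 * β) / (2 * β) + 2 ^ (1 - 2 * β) / (1 - 2 * β) := by
    have : 0 < 1 - 2 * β := by linarith
    positivity
  have hr0 : 0 < r := by linarith
  have hrT : 0 < 2 ^ r * (r * T) := by positivity
  refine ⟨kernelConst β (3 ^ (r - 1)) (2 ^ r) * ((2 ^ r * (r * T)) ^ (1 - 2 * β)) ^ 2 *
    (2 ^ (2 * β) / (2 * β) + 2 ^ (1 - 2 * β) / (1 - 2 * β)), by positivity, ?_⟩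
  intro N hN hat hhat n hn2 hnN
  have hN0 : 0 < N := by omega
  have hN' : (0 : ℝ) < N := by exact_mod_cast hN0
  have hmono := (gmesh_strictMono hT hr0 hN0).monotone
  have hscale : ((2 ^ r * (r * T / N)) ^ (1 - 2 * β)) ^ 2 =
      ((2 ^ r * (r * T)) ^ (1 - 2 * β)) ^ 2 * (N : ℝ) ^ (-(2 * (1 - 2 * β))) := by
    rw [mul_div_assoc', div_rpow hrT.le hN'.le, div_pow, rpow_neg hN'.le,
      show 2 * (1 - 2 * β) = (1 - 2 * β) * (2 : ℕ) by push_cast; ring, rpow_mul_natCast hN'.le,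
      div_eq_mul_inv]
  calc _ ≤ kernelConst β (3 ^ (r - 1)) (2 ^ r) * ((2 ^ r * (r * T / N)) ^ (1 - 2 * β)) ^ 2 *
        (2 ^ (2 * β) / (2 * β) + 2 ^ (1 - 2 * β) / (1 - 2 * β)) :=
      integral_sub_rpow_neg_mul_le hβ0 hβ1 (gmesh_pos hT hN0 one_pos) (hmono (by omega))
        (by positivity) fun s hs =>
          integral_kernel_sq_mul_hat_weight_le hT hr hβ0 hβ1 hN0 hhat hs.1.le
            (hs.2.trans_le (hmono hnN))
    _ = _ := by rw [hscale]; ring
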